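/- arXiv:0804.4187 — 2 statements merged into one kernel-verified Lean document; each statement's English description precedes it below -/
import Mathlib

section
/- Let (X_i^{(n)}) be a row-independent triangular array of Bernoulli(p_{i,n}) variables, S_n = ∑_{i=1}^n X_i^{(n)}, and m_n = ∑_{i=1}^n p_{i,n}. If limsup_n m_n = ∞, then S_n does not converge in distribution to any real-valued random variable. -/
/-!
Test against `x ↦ exp (-|x|)`. Since `S n ≥ 0`, `E[exp (-|S n|)]` is the moment generating
function of `S n` at `-1`, which by independence and `1 + x ≤ exp x` is at most
`exp ((exp (-1) - 1) * m n)`. As `m n` is frequently arbitrarily large, these expectations are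
frequently arbitrarily small, whereas their limit would be `∫ exp (-|x|) dν > 0`.
-/

open MeasureTheory ProbabilityTheory Filter Real

namespace ProbabilityTheory

variable {Ω : Type*} [MeasurableSpace Ω] {μ : Measure Ω}

lemma integral_exp_neg_abs_eq_mgf {Y : Ω → ℝ} (hY : 0 ≤ᵐ[μ] Y) :
    ∫ ω, exp (-|Y ω|) ∂μ = mgf Y μ (-1) := by
  refine integral_congr_ae ?_
  filter_upwards [hY] with ω hω
  simp [abs_of_nonneg hω]

variable [IsProbabilityMeasure μ]

lemma mgf_eq_of_ae_zero_or_one {X : Ω → ℝ} (hX : Measurable X)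
    (hval : ∀ᵐ ω ∂μ, X ω = 0 ∨ X ω = 1) (t : ℝ) :
    mgf X μ t = 1 + (exp t - 1) * μ.real {ω | X ω = 1} := by
  have hset : MeasurableSet {ω | X ω = 1} := hX (measurableSet_singleton 1)
  have hae : (fun ω => exp (t * X ω)) =ᵐ[μ]
      fun ω => 1 + (exp t - 1) * {ω | X ω = 1}.indicator 1 ω := by
    filter_upwards [hval] with ω hω
    rcases hω with h | h <;> simp [h]
  rw [mgf, integral_congr_ae hae, integral_add (integrable_const 1)
    ((integrable_const 1).indicator hset |>.const_mul _), integral_const_mul,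
    integral_indicator_one hset]
  simp

lemma mgf_le_exp_of_ae_zero_or_one {X : Ω → ℝ} (hX : Measurable X)
    (hval : ∀ᵐ ω ∂μ, X ω = 0 ∨ X ω = 1) (t : ℝ) :
    mgf X μ t ≤ exp ((exp t - 1) * μ.real {ω | X ω = 1}) := by
  rw [mgf_eq_of_ae_zero_or_one hX hval, add_comm]
  exact add_one_le_exp _

lemma iIndepFun.mgf_sum_le_of_ae_zero_or_one {ι : Type*} [Fintype ι] {X : ι → Ω → ℝ}
    (hind : iIndepFun X μ) (hX : ∀ i, Measurable (X i))
    (hval : ∀ i, ∀ᵐ ω ∂μ, X i ω = 0 ∨ X i ω = 1) (t : ℝ) :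
    mgf (∑ i, X i) μ t ≤ exp ((exp t - 1) * ∑ i, μ.real {ω | X i ω = 1}) := by
  rw [hind.mgf_sum hX, Finset.mul_sum, exp_sum]
  exact Finset.prod_le_prod (fun _ _ => mgf_nonneg)
    fun i _ => mgf_le_exp_of_ae_zero_or_one (hX i) (hval i) t

lemma integral_exp_neg_abs_sum_range_le {Y : ℕ → Ω → ℝ} {q : ℕ → ℝ} {n : ℕ}
    (hind : iIndepFun (fun i : Fin n => Y i) μ) (hY : ∀ i, Measurable (Y i))
    (hval : ∀ i, ∀ᵐ ω ∂μ, Y i ω = 0 ∨ Y i ω = 1) (hq : ∀ i, q i ≤ μ.real {ω | Y i ω = 1}) :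
    ∫ ω, exp (-|∑ i ∈ Finset.range n, Y i ω|) ∂μ ≤
      exp ((exp (-1) - 1) * ∑ i ∈ Finset.range n, q i) := by
  have hsum : (fun ω => ∑ i ∈ Finset.range n, Y i ω) = ∑ i : Fin n, Y i := by
    ext ω
    rw [Finset.sum_apply, Fin.sum_univ_eq_sum_range (fun i => Y i ω)]
  have hnonneg : 0 ≤ᵐ[μ] ∑ i : Fin n, Y i := by
    filter_upwards [ae_all_iff.2 hval] with ω hω
    simp only [Finset.sum_apply, Pi.zero_apply]
    exact Finset.sum_nonneg fun i _ => by rcases hω i with h | h <;> simp [h]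
  have hk : exp (-1) - 1 ≤ 0 := by linarith [exp_le_one_iff.2 (neg_nonpos.2 zero_le_one)]
  calc ∫ ω, exp (-|∑ i ∈ Finset.range n, Y i ω|) ∂μ
      = mgf (∑ i : Fin n, Y i) μ (-1) := by
        rw [← integral_exp_neg_abs_eq_mgf hnonneg, ← hsum]
    _ ≤ exp ((exp (-1) - 1) * ∑ i : Fin n, μ.real {ω | Y i ω = 1}) :=
        hind.mgf_sum_le_of_ae_zero_or_one (fun i => hY i) (fun i => hval i) _
    _ ≤ exp ((exp (-1) - 1) * ∑ i ∈ Finset.range n, q i) := by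
        rw [← Fin.sum_univ_eq_sum_range q]
        exact exp_le_exp.2 <| mul_le_mul_of_nonpos_left (Finset.sum_le_sum fun i _ => hq i) hk

end ProbabilityTheory

lemma frequently_exp_mul_lt {m : ℕ → ℝ} (hm : ∀ C : ℝ, ∃ᶠ n in atTop, C < m n)
    {k : ℝ} (hk : k < 0) {ε : ℝ} (hε : 0 < ε) : ∃ᶠ n in atTop, exp (k * m n) < ε := by
  refine (hm (log ε / k)).mono fun n hn => ?_
  calc exp (k * m n) < exp (k * (log ε / k)) := exp_lt_exp.2 (mul_lt_mul_of_neg_left hn hk)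
    _ = ε := by rw [mul_div_cancel₀ _ hk.ne, exp_log hε]

noncomputable def expNegAbs : BoundedContinuousFunction ℝ ℝ :=
  .ofNormedAddCommGroup (fun x => exp (-|x|)) (by fun_prop) 1 fun x => by
    simp [abs_of_pos (exp_pos _)]

@[simp] lemma expNegAbs_apply (x : ℝ) : expNegAbs x = exp (-|x|) := rfl

/-- If the mean sums `m n = ∑ i < n, p n i` of a row-independent triangular array of
Bernoulli variables satisfy `limsup m n = ∞` (i.e. `m` is frequently above any level),
then `S n = ∑ i < n, X n i` does not converge in distribution to any real-valued random
variable. -/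
theorem stmt11 {Ω : Type*} [MeasurableSpace Ω] (μ : Measure Ω) [IsProbabilityMeasure μ]
    (X : ℕ → ℕ → Ω → ℝ) (p : ℕ → ℕ → ℝ)
    (hmeas : ∀ n i, Measurable (X n i))
    (hval : ∀ n i, ∀ᵐ ω ∂μ, X n i ω = 0 ∨ X n i ω = 1)
    (hp : ∀ n i, μ {ω | X n i ω = 1} = ENNReal.ofReal (p n i))
    (hind : ∀ n, iIndepFun (fun i : Fin n => X n i) μ)
    (hm : ∀ C : ℝ, ∃ᶠ n in atTop, C < ∑ i ∈ Finset.range n, p n i) :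
    ¬ ∃ ν : Measure ℝ, IsProbabilityMeasure ν ∧
        ∀ f : BoundedContinuousFunction ℝ ℝ,
          Tendsto (fun n : ℕ => ∫ ω, f (∑ i ∈ Finset.range n, X n i ω) ∂μ) atTop
            (nhds (∫ x, f x ∂ν)) := by
  rintro ⟨ν, hν, hconv⟩
  have hL : 0 < ∫ x, expNegAbs x ∂ν := by
    simpa using integral_exp_pos (μ := ν) (f := fun x => -|x|) (expNegAbs.integrable ν)
  have hbound (n : ℕ) : ∫ ω, expNegAbs (∑ i ∈ Finset.range n, X n i ω) ∂μ ≤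
      exp ((exp (-1) - 1) * ∑ i ∈ Finset.range n, p n i) := by
    simp only [expNegAbs_apply]
    refine integral_exp_neg_abs_sum_range_le (hind n) (hmeas n) (hval n) fun i => ?_
    rw [measureReal_def, hp, ENNReal.toReal_ofReal']
    exact le_max_left _ _
  have hk : exp (-1) - 1 < 0 := by linarith [exp_lt_one_iff.2 (neg_one_lt_zero (R := ℝ))]
  obtain ⟨n, hsmall, hlarge⟩ := ((frequently_exp_mul_lt hm hk (half_pos hL)).and_eventually
    ((hconv expNegAbs).eventually (eventually_gt_nhds (half_lt_self hL)))).exists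
  linarith [hbound n]
end

section
/- Let X_1,…,X_n be independent Bernoulli(p_i) random variables and let W = ∑_{i=1}^n X_i, λ = ∑_{i=1}^n p_i. Then the total variation distance between the law of W and Poisson(λ) is at most 2·∑_{i=1}^n p_i² ≤ 2·(max_i p_i)·λ. -/
/-!
Let `P_s` be the law on `ℕ` of `∑_{i ∈ s} X_i` and `λ_s = ∑_{i ∈ s} p_i`. By independence,
`P_{insert a s}` is the Cauchy convolution of Bernoulli(`p_a`) with `P_s`, while
Poisson(`p_a + λ_s`) is the convolution of Poisson(`p_a`) with Poisson(`λ_s`). Convolving with a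
sub-probability sequence does not increase the `ℓ¹` distance, so the distance to the Poisson law
grows at each step of an induction on `s` by at most
`‖Bernoulli(a) - Poisson(a)‖₁ = 2a(1 - e^{-a}) ≤ 2a²`.
All `ℓ¹` distances are bounded through their partial sums over `range N`, which avoids
summability side conditions until the very end.
-/

open Finset MeasureTheory ProbabilityTheory

noncomputable section

def cauchyConv (f g : ℕ → ℝ) (k : ℕ) : ℝ := ∑ j ∈ range (k + 1), f j * g (k - j)

lemma cauchyConv_comm (f g : ℕ → ℝ) : cauchyConv f g = cauchyConv g f := by
  ext k
  rw [cauchyConv, cauchyConv, ← sum_range_reflect]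
  refine sum_congr rfl fun j hj => ?_
  rw [mem_range] at hj
  rw [show k + 1 - 1 - j = k - j by omega, Nat.sub_sub_self (by omega), mul_comm]

lemma cauchyConv_sub_cauchyConv (a b c d : ℕ → ℝ) (k : ℕ) :
    cauchyConv a b k - cauchyConv c d k = cauchyConv (a - c) b k + cauchyConv (b - d) c k := by
  rw [cauchyConv_comm (b - d)]
  simp only [cauchyConv, ← sum_add_distrib, ← sum_sub_distrib, Pi.sub_apply]
  exact sum_congr rfl fun j _ => by ring

lemma sum_range_abs_cauchyConv_le {c : ℕ → ℝ} (hc : ∀ k, 0 ≤ c k)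
    (hc1 : ∀ N, ∑ k ∈ range N, c k ≤ 1) (d : ℕ → ℝ) (N : ℕ) :
    ∑ k ∈ range N, |cauchyConv d c k| ≤ ∑ j ∈ range N, |d j| :=
  calc ∑ k ∈ range N, |cauchyConv d c k|
      ≤ ∑ k ∈ range N, ∑ j ∈ range (k + 1), |d j| * c (k - j) :=
        sum_le_sum fun k _ => (abs_sum_le_sum_abs _ _).trans_eq <|
          sum_congr rfl fun j _ => by rw [abs_mul, abs_of_nonneg (hc _)]
    _ = ∑ j ∈ range N, |d j| * ∑ m ∈ range (N - j), c m := by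
        rw [sum_range_diag_flip N fun j m => |d j| * c m]; simp_rw [mul_sum]
    _ ≤ ∑ j ∈ range N, |d j| :=
        sum_le_sum fun j _ => mul_le_of_le_one_right (abs_nonneg _) (hc1 _)

lemma sum_range_abs_cauchyConv_sub_le {a b c d : ℕ → ℝ}
    (hb : ∀ k, 0 ≤ b k) (hb1 : ∀ N, ∑ k ∈ range N, b k ≤ 1)
    (hc : ∀ k, 0 ≤ c k) (hc1 : ∀ N, ∑ k ∈ range N, c k ≤ 1) (N : ℕ) :
    ∑ k ∈ range N, |cauchyConv a b k - cauchyConv c d k| ≤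
      ∑ k ∈ range N, |a k - c k| + ∑ k ∈ range N, |b k - d k| :=
  calc ∑ k ∈ range N, |cauchyConv a b k - cauchyConv c d k|
      ≤ ∑ k ∈ range N, (|cauchyConv (a - c) b k| + |cauchyConv (b - d) c k|) :=
        sum_le_sum fun k _ => by rw [cauchyConv_sub_cauchyConv]; exact abs_add_le _ _
    _ ≤ _ := by
        rw [sum_add_distrib]
        exact add_le_add (sum_range_abs_cauchyConv_le hb hb1 _ N)
          (sum_range_abs_cauchyConv_le hc hc1 _ N)

def poissonWeight (t : ℝ) (k : ℕ) : ℝ := Real.exp (-t) * t ^ k / k.factorial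

lemma poissonWeight_nonneg {t : ℝ} (ht : 0 ≤ t) (k : ℕ) : 0 ≤ poissonWeight t k := by
  unfold poissonWeight; positivity

lemma sum_range_poissonWeight_le_one {t : ℝ} (ht : 0 ≤ t) (N : ℕ) :
    ∑ k ∈ range N, poissonWeight t k ≤ 1 :=
  calc ∑ k ∈ range N, poissonWeight t k = Real.exp (-t) * ∑ k ∈ range N, t ^ k / k.factorial := by
        rw [mul_sum]; exact sum_congr rfl fun k _ => mul_div_assoc _ _ _
    _ ≤ Real.exp (-t) * Real.exp t := by gcongr; exact Real.sum_le_exp_of_nonneg ht N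
    _ = 1 := by rw [← Real.exp_add, neg_add_cancel, Real.exp_zero]

lemma cauchyConv_poissonWeight (a b : ℝ) :
    cauchyConv (poissonWeight a) (poissonWeight b) = poissonWeight (a + b) := by
  ext k
  rw [cauchyConv, poissonWeight, neg_add, Real.exp_add, add_pow, mul_sum, sum_div]
  refine sum_congr rfl fun j hj => ?_
  rw [Nat.cast_choose ℝ (Nat.le_of_lt_succ (mem_range.1 hj)), poissonWeight, poissonWeight]
  field_simp

def bernoulliWeight (a : ℝ) : ℕ → ℝ
  | 0 => 1 - a
  | 1 => a
  | _ + 2 => 0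

lemma sum_range_abs_bernoulliWeight_sub_poissonWeight_le {a : ℝ} (ha : 0 ≤ a) (N : ℕ) :
    ∑ k ∈ range N, |bernoulliWeight a k - poissonWeight a k| ≤ 2 * a ^ 2 := by
  have h0 : poissonWeight a 0 = Real.exp (-a) := by simp [poissonWeight]
  have h1 : poissonWeight a 1 = a * Real.exp (-a) := by simp [poissonWeight, mul_comm]
  have hexp : 1 - a ≤ Real.exp (-a) := by linarith [Real.add_one_le_exp (-a)]
  have htail : ∑ k ∈ range N, poissonWeight a (k + 2) ≤ 1 - Real.exp (-a) - a * Real.exp (-a) := by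
    have := sum_range_poissonWeight_le_one ha (N + 2)
    rw [sum_range_succ', sum_range_succ', h0, zero_add, h1] at this
    linarith
  calc ∑ k ∈ range N, |bernoulliWeight a k - poissonWeight a k|
      ≤ ∑ k ∈ range (N + 2), |bernoulliWeight a k - poissonWeight a k| :=
        sum_le_sum_of_subset_of_nonneg (range_subset_range.2 (by omega))
          fun _ _ _ => abs_nonneg _
    _ = ∑ k ∈ range N, poissonWeight a (k + 2) + |a - a * Real.exp (-a)| +
          |1 - a - Real.exp (-a)| := by
        rw [sum_range_succ', sum_range_succ', zero_add, h0, h1]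
        simp only [bernoulliWeight, zero_sub, abs_neg, abs_of_nonneg (poissonWeight_nonneg ha _)]
    _ ≤ 2 * a * (1 - Real.exp (-a)) := by
        rw [abs_of_nonneg (by nlinarith [Real.exp_le_one_iff.2 (neg_nonpos.2 ha)]),
          abs_of_nonpos (by linarith)]
        linarith
    _ ≤ 2 * a ^ 2 := by nlinarith

section NatValued

variable {Ω : Type*} [MeasurableSpace Ω] {μ : Measure Ω}

def natPmf (μ : Measure Ω) (W : Ω → ℝ) (k : ℕ) : ℝ := μ.real (W ⁻¹' {(k : ℝ)})

lemma natPmf_nonneg (W : Ω → ℝ) (k : ℕ) : 0 ≤ natPmf μ W k := measureReal_nonneg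

lemma sum_range_natPmf_le_one [IsProbabilityMeasure μ] {W : Ω → ℝ} (hW : Measurable W)
    (N : ℕ) : ∑ k ∈ range N, natPmf μ W k ≤ 1 := by
  unfold natPmf
  rw [← measureReal_biUnion_finset
    (fun i _ j _ hij => Disjoint.preimage W (Set.disjoint_singleton.2 (by exact_mod_cast hij)))
    fun k _ => hW (measurableSet_singleton _)]
  exact measureReal_le_one

lemma natPmf_zero [IsProbabilityMeasure μ] : natPmf μ 0 = poissonWeight 0 := by
  ext (_ | k)
  · simp [natPmf, poissonWeight, Set.preimage]
  · simp [natPmf, poissonWeight, Set.preimage, (Nat.cast_add_one_ne_zero k).symm]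

lemma natPmf_add_eq_cauchyConv [IsFiniteMeasure μ] {X W : Ω → ℝ} (hX : Measurable X)
    (hW : Measurable W) (hXn : ∀ᵐ ω ∂μ, X ω ∈ Set.range ((↑) : ℕ → ℝ))
    (hWn : ∀ᵐ ω ∂μ, W ω ∈ Set.range ((↑) : ℕ → ℝ)) (hXW : IndepFun X W μ) :
    natPmf μ (X + W) = cauchyConv (natPmf μ X) (natPmf μ W) := by
  ext k
  have hsplit : (X + W) ⁻¹' {(k : ℝ)} =ᵐ[μ]
      ⋃ j ∈ range (k + 1), X ⁻¹' {(j : ℝ)} ∩ W ⁻¹' {((k - j : ℕ) : ℝ)} := by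
    rw [Filter.eventuallyEq_set]
    filter_upwards [hXn, hWn] with ω ⟨a, ha⟩ ⟨b, hb⟩
    simp only [Set.mem_preimage, Set.mem_singleton_iff, Set.mem_iUnion, Set.mem_inter_iff,
      mem_range, Pi.add_apply, ← ha, ← hb]
    norm_cast
    constructor
    · rintro rfl
      exact ⟨a, by omega, rfl, by omega⟩
    · rintro ⟨j, hj, rfl, rfl⟩
      omega
  have hdisj : Set.PairwiseDisjoint ↑(range (k + 1))
      fun j : ℕ => X ⁻¹' {(j : ℝ)} ∩ W ⁻¹' {((k - j : ℕ) : ℝ)} :=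
    fun i _ j _ hij => (Disjoint.preimage X (Set.disjoint_singleton.2 (by exact_mod_cast hij))).mono
      Set.inter_subset_left Set.inter_subset_left
  rw [natPmf, measureReal_congr hsplit, measureReal_biUnion_finset hdisj
    fun j _ => (hX (measurableSet_singleton _)).inter (hW (measurableSet_singleton _))]
  refine sum_congr rfl fun j _ => ?_
  rw [measureReal_def, hXW.measure_inter_preimage_eq_mul _ _ (measurableSet_singleton _)
    (measurableSet_singleton _), ENNReal.toReal_mul]
  rfl

lemma natPmf_eq_bernoulliWeight [IsProbabilityMeasure μ] {X : Ω → ℝ} {a : ℝ} (ha : 0 ≤ a)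
    (hX : Measurable X) (hval : ∀ᵐ ω ∂μ, X ω = 0 ∨ X ω = 1)
    (hp : μ {ω | X ω = 1} = ENNReal.ofReal a) : natPmf μ X = bernoulliWeight a := by
  have h1 : natPmf μ X 1 = a := by
    rw [natPmf, measureReal_def, Nat.cast_one]
    exact (congrArg ENNReal.toReal hp).trans (ENNReal.toReal_ofReal ha)
  ext (_ | _ | k)
  · have hcompl : X ⁻¹' {((0 : ℕ) : ℝ)} =ᵐ[μ] ((X ⁻¹' {((1 : ℕ) : ℝ)})ᶜ : Set Ω) := by
      rw [Filter.eventuallyEq_set]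
      filter_upwards [hval] with ω hω
      rcases hω with h | h <;> simp [h]
    rw [bernoulliWeight, natPmf, measureReal_congr hcompl,
      probReal_compl_eq_one_sub (hX (measurableSet_singleton _))]
    exact congrArg (1 - ·) h1
  · exact h1
  · rw [bernoulliWeight, natPmf, measureReal_eq_zero_iff, measure_eq_zero_iff_ae_notMem]
    filter_upwards [hval] with ω hω
    rcases hω with h | h <;> simp [h] <;> norm_cast

lemma ae_mem_range_natCast_of_zero_or_one {X : Ω → ℝ} (hval : ∀ᵐ ω ∂μ, X ω = 0 ∨ X ω = 1) :
    ∀ᵐ ω ∂μ, X ω ∈ Set.range ((↑) : ℕ → ℝ) := by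
  filter_upwards [hval] with ω hω
  rcases hω with h | h
  · exact ⟨0, by simp [h]⟩
  · exact ⟨1, by simp [h]⟩

lemma ae_finsetSum_mem_range_natCast {ι : Type*} {X : ι → Ω → ℝ}
    (hX : ∀ i, ∀ᵐ ω ∂μ, X i ω ∈ Set.range ((↑) : ℕ → ℝ)) (s : Finset ι) :
    ∀ᵐ ω ∂μ, (∑ i ∈ s, X i) ω ∈ Set.range ((↑) : ℕ → ℝ) := by
  filter_upwards [(Filter.eventually_all_finset s).2 fun i _ => hX i] with ω hω
  rw [Finset.sum_apply]
  exact sum_induction _ (· ∈ Set.range ((↑) : ℕ → ℝ))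
    (fun _ _ ⟨a, ha⟩ ⟨b, hb⟩ => ⟨a + b, by rw [Nat.cast_add, ha, hb]⟩) ⟨0, Nat.cast_zero⟩ hω

end NatValued

theorem sum_range_abs_natPmf_finsetSum_sub_poissonWeight_le {Ω ι : Type*} [MeasurableSpace Ω]
    {μ : Measure Ω} [IsProbabilityMeasure μ] {X : ι → Ω → ℝ} {p : ι → ℝ} (hp0 : ∀ i, 0 ≤ p i)
    (hmeas : ∀ i, Measurable (X i)) (hval : ∀ i, ∀ᵐ ω ∂μ, X i ω = 0 ∨ X i ω = 1)
    (hp : ∀ i, μ {ω | X i ω = 1} = ENNReal.ofReal (p i)) (hind : iIndepFun X μ)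
    (s : Finset ι) (N : ℕ) :
    ∑ k ∈ range N, |natPmf μ (∑ i ∈ s, X i) k - poissonWeight (∑ i ∈ s, p i) k| ≤
      2 * ∑ i ∈ s, p i ^ 2 := by
  classical
  induction s using Finset.induction_on with
  | empty => simp [natPmf_zero]
  | @insert a s ha ih =>
    have hW : Measurable (∑ i ∈ s, X i) :=
      sum_induction _ Measurable (fun _ _ => Measurable.add) measurable_zero fun i _ => hmeas i
    have hlaw : natPmf μ (∑ i ∈ insert a s, X i) =
        cauchyConv (bernoulliWeight (p a)) (natPmf μ (∑ i ∈ s, X i)) := by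
      rw [sum_insert ha, natPmf_add_eq_cauchyConv (hmeas a) hW
        (ae_mem_range_natCast_of_zero_or_one (hval a))
        (ae_finsetSum_mem_range_natCast (fun i => ae_mem_range_natCast_of_zero_or_one (hval i)) s)
        (hind.indepFun_finsetSum_of_notMem hmeas ha).symm,
        natPmf_eq_bernoulliWeight (hp0 a) (hmeas a) (hval a) (hp a)]
    rw [hlaw, sum_insert ha, sum_insert ha, ← cauchyConv_poissonWeight]
    calc _ ≤ ∑ k ∈ range N, |bernoulliWeight (p a) k - poissonWeight (p a) k| +
          ∑ k ∈ range N, |natPmf μ (∑ i ∈ s, X i) k - poissonWeight (∑ i ∈ s, p i) k| :=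
          sum_range_abs_cauchyConv_sub_le (natPmf_nonneg _) (sum_range_natPmf_le_one hW)
            (poissonWeight_nonneg (hp0 a)) (sum_range_poissonWeight_le_one (hp0 a)) N
      _ ≤ 2 * p a ^ 2 + 2 * ∑ i ∈ s, p i ^ 2 :=
          add_le_add (sum_range_abs_bernoulliWeight_sub_poissonWeight_le (hp0 a) N) ih
      _ = 2 * (p a ^ 2 + ∑ i ∈ s, p i ^ 2) := by ring

lemma sum_sq_le_iSup_mul_sum {ι : Type*} [Fintype ι] {p : ι → ℝ} (hp : ∀ i, 0 ≤ p i) :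
    ∑ i, p i ^ 2 ≤ (⨆ i, p i) * ∑ i, p i := by
  rw [mul_sum]
  exact sum_le_sum fun i _ => by
    rw [sq]; exact mul_le_mul_of_nonneg_right (le_ciSup (Set.finite_range p).bddAbove i) (hp i)

end

theorem stmt16_general {Ω : Type*} [MeasurableSpace Ω] (μ : Measure Ω) [IsProbabilityMeasure μ]
    (n : ℕ) (X : Fin n → Ω → ℝ) (p : Fin n → ℝ)
    (hp01 : ∀ i, p i ∈ Set.Icc (0 : ℝ) 1)
    (hmeas : ∀ i, Measurable (X i))
    (hval : ∀ i, ∀ᵐ ω ∂μ, X i ω = 0 ∨ X i ω = 1)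
    (hp : ∀ i, μ {ω | X i ω = 1} = ENNReal.ofReal (p i))
    (hind : iIndepFun X μ) :
    (∑' k : ℕ, |(μ {ω | ∑ i, X i ω = (k : ℝ)}).toReal -
        Real.exp (-(∑ i, p i)) * (∑ i, p i) ^ k / (k.factorial : ℝ)| ≤
      2 * ∑ i, (p i) ^ 2) ∧
    2 * ∑ i, (p i) ^ 2 ≤ 2 * (⨆ i, p i) * ∑ i, p i := by
  have hp0 : ∀ i, 0 ≤ p i := fun i => (hp01 i).1
  refine ⟨Real.tsum_le_of_sum_range_le (fun _ => abs_nonneg _) fun N => ?_, ?_⟩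
  · have hlevel : ∀ k : ℕ, (∑ i, X i) ⁻¹' {(k : ℝ)} = {ω | ∑ i, X i ω = k} := fun k => by
      ext; simp [Finset.sum_apply]
    simpa only [natPmf, poissonWeight, hlevel, measureReal_def] using
      sum_range_abs_natPmf_finsetSum_sub_poissonWeight_le hp0 hmeas hval hp hind univ N
  · rw [mul_assoc]
    exact mul_le_mul_of_nonneg_left (sum_sq_le_iSup_mul_sum hp0) zero_le_two

/-- Le Cam-type Poisson approximation: for `W` a sum of independent Bernoulli(`p i`)
random variables and `λ = ∑ p i`, the total variation distance
`∑_k |P{W = k} - e^{-λ} λ^k / k!|` is at most `2 ∑ p i ² ≤ 2 (max_i p i) λ`. -/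
theorem stmt16 {Ω : Type*} [MeasurableSpace Ω] (μ : Measure Ω) [IsProbabilityMeasure μ]
    (n : ℕ) (hn : 0 < n) (X : Fin n → Ω → ℝ) (p : Fin n → ℝ)
    (hp01 : ∀ i, p i ∈ Set.Icc (0 : ℝ) 1)
    (hmeas : ∀ i, Measurable (X i))
    (hval : ∀ i, ∀ᵐ ω ∂μ, X i ω = 0 ∨ X i ω = 1)
    (hp : ∀ i, μ {ω | X i ω = 1} = ENNReal.ofReal (p i))
    (hind : iIndepFun X μ) :
    (∑' k : ℕ, |(μ {ω | ∑ i, X i ω = (k : ℝ)}).toReal -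
        Real.exp (-(∑ i, p i)) * (∑ i, p i) ^ k / (k.factorial : ℝ)| ≤
      2 * ∑ i, (p i) ^ 2) ∧
    2 * ∑ i, (p i) ^ 2 ≤ 2 * (⨆ i, p i) * ∑ i, p i :=
  stmt16_general μ n X p hp01 hmeas hval hp hind
end
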